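/- Consider the subcritical binary Galton-Watson tree with parameters p_N, β_N as in Proposition 3.1 (division with probability p_N, leaves marked with probability β_N), conditioned on the root not being marked. Let A_1^N be the event that exactly one leaf is marked. Then P(A_1^N) = γ_N (1-x_N)/(x_N(1-γ_N)), where x_N = √(1-4p_N(1-p_N)(1-β_N)); and as N → ∞ (with γ_N = γ/N^α → 0), P(A_1^N) = (2b_0/λ_0)γ_N + o(γ_N). -/

import Mathlib

open Filter Topology

section MyAux
open Finset

/-- central binomial coefficient is at most `4^n`. -/
lemma my_cb_le_four_pow : ∀ n : ℕ, Nat.centralBinom n ≤ 4 ^ n := by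
  intro n
  induction n with
  | zero => simp [Nat.centralBinom]
  | succ n ih =>
    have h := Nat.succ_mul_centralBinom_succ n
    have h2 : (n + 1) * Nat.centralBinom (n + 1) ≤ (n + 1) * (4 * Nat.centralBinom n) := by
      rw [h]; ring_nf; nlinarith [Nat.centralBinom_pos n]
    have := Nat.le_of_mul_le_mul_left h2 (Nat.succ_pos n)
    calc Nat.centralBinom (n + 1) ≤ 4 * Nat.centralBinom n := this
    _ ≤ 4 * 4 ^ n := by omega
    _ = 4 ^ (n + 1) := by ring

lemma my_cat_le_four_pow (n : ℕ) : (catalan n : ℝ) ≤ 4 ^ n := by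
  have h1 : catalan n ≤ Nat.centralBinom n := by
    calc catalan n ≤ (n + 1) * catalan n := Nat.le_mul_of_pos_left _ (Nat.succ_pos n)
    _ = Nat.centralBinom n := succ_mul_catalan_eq_centralBinom n
  have := h1.trans (my_cb_le_four_pow n)
  exact_mod_cast this

lemma my_catalan_succ_range (n : ℕ) :
    catalan (n + 1) = ∑ k ∈ range (n + 1), catalan k * catalan (n - k) := by
  rw [catalan_succ]
  exact Fin.sum_univ_eq_sum_range (fun i => catalan i * catalan (n - i)) (n + 1)

lemma my_doubling (n : ℕ) :
    2 * ∑ k ∈ range (n + 1), (k + 1) * catalan k * catalan (n - k)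
      = (n + 2) * catalan (n + 1) := by
  have hrefl : ∑ k ∈ range (n + 1), (k + 1) * catalan k * catalan (n - k)
      = ∑ k ∈ range (n + 1), (n - k + 1) * catalan (n - k) * catalan (n - (n - k)) := by
    exact (Finset.sum_range_reflect (fun k => (k + 1) * catalan k * catalan (n - k)) (n + 1)).symm
  rw [two_mul]
  nth_rewrite 2 [hrefl]
  rw [← Finset.sum_add_distrib, my_catalan_succ_range, Finset.mul_sum]
  apply Finset.sum_congr rfl
  intro k hk
  rw [Finset.mem_range] at hk
  have hk' : k ≤ n := Nat.lt_succ_iff.mp hk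
  have h1 : n - (n - k) = k := Nat.sub_sub_self hk'
  rw [h1]
  have h2 : k + 1 + (n - k + 1) = n + 2 := by omega
  calc (k + 1) * catalan k * catalan (n - k) + (n - k + 1) * catalan (n - k) * catalan k
      = (k + 1 + (n - k + 1)) * (catalan k * catalan (n - k)) := by ring
  _ = (n + 2) * (catalan k * catalan (n - k)) := by rw [h2]

noncomputable def Fc (s : ℝ) : ℝ := ∑' n : ℕ, (catalan n : ℝ) * s ^ n
noncomputable def Hc (s : ℝ) : ℝ := ∑' n : ℕ, ((n : ℝ) + 1) * (catalan n : ℝ) * s ^ n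

lemma my_summable_F {s : ℝ} (h0 : 0 ≤ s) (h : s < 1 / 4) :
    Summable (fun n : ℕ => (catalan n : ℝ) * s ^ n) := by
  apply Summable.of_nonneg_of_le (fun n => by positivity)
    (fun n => ?_) (summable_geometric_of_lt_one (by linarith) (by linarith : 4 * s < 1))
  calc (catalan n : ℝ) * s ^ n ≤ 4 ^ n * s ^ n := by
        apply mul_le_mul_of_nonneg_right (my_cat_le_four_pow n) (by positivity)
  _ = (4 * s) ^ n := by rw [mul_pow]

lemma my_summable_H {s : ℝ} (h0 : 0 ≤ s) (h : s < 1 / 4) :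
    Summable (fun n : ℕ => ((n : ℝ) + 1) * (catalan n : ℝ) * s ^ n) := by
  have hr : ‖(4 * s : ℝ)‖ < 1 := by rw [Real.norm_eq_abs, abs_of_nonneg (by linarith)]; linarith
  have h1 : Summable (fun n : ℕ => ((n : ℝ) + 1) * (4 * s) ^ n) := by
    have ha : Summable (fun n : ℕ => (n : ℝ) ^ 1 * (4 * s) ^ n) :=
      summable_pow_mul_geometric_of_norm_lt_one 1 hr
    have hb : Summable (fun n : ℕ => (4 * s : ℝ) ^ n) :=
      summable_geometric_of_lt_one (by linarith) (by linarith)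
    have := ha.add hb
    apply this.congr
    intro n; simp; ring
  apply Summable.of_nonneg_of_le (fun n => by positivity) (fun n => ?_) h1
  calc ((n : ℝ) + 1) * (catalan n : ℝ) * s ^ n ≤ ((n : ℝ) + 1) * 4 ^ n * s ^ n := by
        apply mul_le_mul_of_nonneg_right _ (by positivity)
        apply mul_le_mul_of_nonneg_left (my_cat_le_four_pow n) (by positivity)
  _ = ((n : ℝ) + 1) * (4 * s) ^ n := by rw [mul_pow]; ring

lemma my_norm_summable_F {s : ℝ} (h0 : 0 ≤ s) (h : s < 1 / 4) :
    Summable (fun n : ℕ => ‖(catalan n : ℝ) * s ^ n‖) := by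
  apply (my_summable_F h0 h).congr
  intro n; rw [Real.norm_eq_abs, abs_of_nonneg (by positivity)]

lemma my_norm_summable_H {s : ℝ} (h0 : 0 ≤ s) (h : s < 1 / 4) :
    Summable (fun n : ℕ => ‖((n : ℝ) + 1) * (catalan n : ℝ) * s ^ n‖) := by
  apply (my_summable_H h0 h).congr
  intro n; rw [Real.norm_eq_abs, abs_of_nonneg (by positivity)]

/-- functional equation for F -/
lemma my_F_eq {s : ℝ} (h0 : 0 ≤ s) (h : s < 1 / 4) : Fc s = 1 + s * (Fc s) ^ 2 := by
  have hcauchy : (Fc s) * (Fc s) = ∑' n : ℕ, (catalan (n + 1) : ℝ) * s ^ n := by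
    rw [Fc, tsum_mul_tsum_eq_tsum_sum_range_of_summable_norm (my_norm_summable_F h0 h)
      (my_norm_summable_F h0 h)]
    congr 1; funext n
    have : ∀ k ∈ range (n + 1), (catalan k : ℝ) * s ^ k * ((catalan (n - k) : ℝ) * s ^ (n - k))
        = (catalan k : ℝ) * (catalan (n - k) : ℝ) * s ^ n := by
      intro k hk
      rw [Finset.mem_range] at hk
      have : s ^ k * s ^ (n - k) = s ^ n := by
        rw [← pow_add]; congr 1; omega
      rw [mul_mul_mul_comm, this]
    rw [Finset.sum_congr rfl this, ← Finset.sum_mul]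
    congr 1
    rw [my_catalan_succ_range n]
    push_cast
    rfl
  have hshift : Fc s = 1 + ∑' n : ℕ, (catalan (n + 1) : ℝ) * s ^ (n + 1) := by
    rw [Fc, Summable.tsum_eq_zero_add (my_summable_F h0 h)]
    simp
  have : s * ((Fc s) * (Fc s)) = ∑' n : ℕ, (catalan (n + 1) : ℝ) * s ^ (n + 1) := by
    rw [hcauchy, ← tsum_mul_left]
    congr 1; funext n; ring
  rw [pow_two, this, hshift]

/-- functional equation for H -/
lemma my_H_eq {s : ℝ} (h0 : 0 ≤ s) (h : s < 1 / 4) : Hc s = 1 + 2 * s * Fc s * Hc s := by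
  have hcauchy : (Hc s) * (Fc s)
      = ∑' n : ℕ, (((n : ℝ) + 2) * (catalan (n + 1) : ℝ) / 2) * s ^ n := by
    rw [Hc, Fc, tsum_mul_tsum_eq_tsum_sum_range_of_summable_norm (my_norm_summable_H h0 h)
      (my_norm_summable_F h0 h)]
    congr 1; funext n
    have step : ∀ k ∈ range (n + 1),
        ((k : ℝ) + 1) * (catalan k : ℝ) * s ^ k * ((catalan (n - k) : ℝ) * s ^ (n - k))
        = ((k : ℝ) + 1) * (catalan k : ℝ) * (catalan (n - k) : ℝ) * s ^ n := by
      intro k hk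
      rw [Finset.mem_range] at hk
      have : s ^ k * s ^ (n - k) = s ^ n := by
        rw [← pow_add]; congr 1; omega
      calc ((k : ℝ) + 1) * (catalan k : ℝ) * s ^ k * ((catalan (n - k) : ℝ) * s ^ (n - k))
          = ((k : ℝ) + 1) * (catalan k : ℝ) * (catalan (n - k) : ℝ) * (s ^ k * s ^ (n - k)) := by
            ring
      _ = _ := by rw [this]
    rw [Finset.sum_congr rfl step, ← Finset.sum_mul]
    congr 1
    have := my_doubling n
    have hcast : 2 * ∑ k ∈ range (n + 1), ((k : ℝ) + 1) * (catalan k : ℝ) * (catalan (n - k) : ℝ)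
        = ((n : ℝ) + 2) * (catalan (n + 1) : ℝ) := by
      have := congrArg (fun m : ℕ => (m : ℝ)) (my_doubling n)
      push_cast at this
      convert this using 2
    linarith
  have hshift : Hc s = 1 + ∑' n : ℕ, (((n : ℝ) + 2) * (catalan (n + 1) : ℝ)) * s ^ (n + 1) := by
    rw [Hc, Summable.tsum_eq_zero_add (my_summable_H h0 h)]
    norm_num
    congr 1; funext n; push_cast; ring
  have hmul : 2 * s * ((Hc s) * (Fc s))
      = ∑' n : ℕ, (((n : ℝ) + 2) * (catalan (n + 1) : ℝ)) * s ^ (n + 1) := by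
    rw [hcauchy, ← tsum_mul_left]
    congr 1; funext n; ring
  calc Hc s = 1 + ∑' n : ℕ, (((n : ℝ) + 2) * (catalan (n + 1) : ℝ)) * s ^ (n + 1) := hshift
  _ = 1 + 2 * s * ((Hc s) * (Fc s)) := by rw [hmul]
  _ = 1 + 2 * s * Fc s * Hc s := by ring

lemma my_two_s_F_ne_one {t : ℝ} (h0 : 0 ≤ t) (h : t < 1 / 4) : 2 * t * Fc t - 1 ≠ 0 := by
  have hF := my_F_eq h0 h
  have hsq : (2 * t * Fc t - 1) ^ 2 = 1 - 4 * t := by nlinarith [hF]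
  intro hzero
  rw [hzero] at hsq
  simp at hsq
  linarith

lemma my_g_cont {s : ℝ} (h0 : 0 ≤ s) (h : s < 1 / 4) :
    ContinuousOn (fun t => 2 * t * Fc t) (Set.Icc 0 s) := by
  have key : ContinuousOn (fun t : ℝ => ∑' n : ℕ, 2 * (catalan n : ℝ) * t ^ (n + 1))
      (Set.Icc 0 s) := by
    apply continuousOn_tsum (u := fun n => 2 * (catalan n : ℝ) * s ^ (n + 1))
    · intro n; exact (continuous_const.mul (continuous_pow (n + 1))).continuousOn
    · have := (my_summable_F h0 h).mul_left (2 * s)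
      apply this.congr
      intro n; ring
    · intro n t ht
      obtain ⟨ht0, hts⟩ := ht
      rw [Real.norm_eq_abs, abs_of_nonneg (by positivity)]
      have : t ^ (n + 1) ≤ s ^ (n + 1) := pow_le_pow_left₀ ht0 hts (n + 1)
      nlinarith [Nat.cast_nonneg (α := ℝ) (catalan n)]
  apply key.congr
  intro t ht
  obtain ⟨ht0, hts⟩ := ht
  have hsum := my_summable_F ht0 (lt_of_le_of_lt hts h)
  simp only [Fc]
  rw [← tsum_mul_left]
  congr 1; funext n; ring

lemma my_two_s_F_lt_one {s : ℝ} (h0 : 0 ≤ s) (h : s < 1 / 4) : 2 * s * Fc s - 1 < 0 := by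
  by_contra hpos
  push_neg at hpos
  have hne := my_two_s_F_ne_one h0 h
  have hgt : 0 < 2 * s * Fc s - 1 := lt_of_le_of_ne hpos (Ne.symm hne)
  -- IVT on [0, s]
  have hcont : ContinuousOn (fun t => 2 * t * Fc t - 1) (Set.Icc 0 s) :=
    (my_g_cont h0 h).sub continuousOn_const
  have h00 : (fun t => 2 * t * Fc t - 1) 0 = -1 := by simp
  have hiv := intermediate_value_Icc h0 hcont
  have hmem : (0 : ℝ) ∈ Set.Icc ((fun t => 2 * t * Fc t - 1) 0) ((fun t => 2 * t * Fc t - 1) s) := by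
    rw [h00]; constructor
    · norm_num
    · exact le_of_lt hgt
  obtain ⟨c, hc, hc0⟩ := hiv hmem
  have hcs : c < 1 / 4 := lt_of_le_of_lt hc.2 h
  exact my_two_s_F_ne_one hc.1 hcs hc0

lemma my_F_val {s : ℝ} (h0 : 0 ≤ s) (h : s < 1 / 4) :
    2 * s * Fc s = 1 - Real.sqrt (1 - 4 * s) := by
  have hF := my_F_eq h0 h
  have hsq : (1 - 2 * s * Fc s) ^ 2 = 1 - 4 * s := by nlinarith [hF]
  have hlt := my_two_s_F_lt_one h0 h
  have : Real.sqrt (1 - 4 * s) = 1 - 2 * s * Fc s := by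
    rw [← hsq]
    exact Real.sqrt_sq (by linarith)
  linarith

lemma my_H_val {s : ℝ} (h0 : 0 ≤ s) (h : s < 1 / 4) :
    Hc s = 1 / Real.sqrt (1 - 4 * s) := by
  have hH := my_H_eq h0 h
  have hFv := my_F_val h0 h
  have hxpos : 0 < Real.sqrt (1 - 4 * s) := Real.sqrt_pos.mpr (by linarith)
  have : Hc s * Real.sqrt (1 - 4 * s) = 1 := by nlinarith [hH, hFv]
  field_simp at this ⊢
  linarith

lemma my_alpha_eq (α : ℕ → ℝ) (hα1 : α 1 = 1)
    (hαrec : ∀ n, 2 ≤ n → α n = ∑ i ∈ Finset.Ico 1 n, α i * α (n - i)) :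
    ∀ m : ℕ, α (m + 1) = (catalan m : ℝ) := by
  intro m
  induction m using Nat.strong_induction_on with
  | _ m ih =>
    match m with
    | 0 => simpa using hα1
    | Nat.succ j =>
      rw [hαrec (j + 2) (by omega)]
      rw [Finset.sum_Ico_eq_sum_range]
      have : ∀ k ∈ range (j + 2 - 1), α (1 + k) * α (j + 2 - (1 + k))
          = (catalan k : ℝ) * (catalan (j - k) : ℝ) := by
        intro k hk
        rw [Finset.mem_range] at hk
        have hk' : k ≤ j := by omega
        have e1 : 1 + k = k + 1 := by omega
        have e2 : j + 2 - (k + 1) = (j - k) + 1 := by omega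
        rw [e1, e2, ih k (by omega), ih (j - k) (by omega)]
      rw [Finset.sum_congr rfl this]
      have : j + 2 - 1 = j + 1 := by omega
      rw [this, my_catalan_succ_range j]
      push_cast
      rfl

lemma my_cb_lb (m : ℕ) : 4 ^ m ≤ (2 * m + 2) * Nat.centralBinom m := by
  match m with
  | 0 => simp [Nat.centralBinom]
  | Nat.succ j =>
    have h := Nat.four_pow_le_two_mul_self_mul_centralBinom (j + 1) (by omega)
    calc 4 ^ (j + 1) ≤ 2 * (j + 1) * Nat.centralBinom (j + 1) := h
    _ ≤ (2 * (j + 1) + 2) * Nat.centralBinom (j + 1) :=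
        Nat.mul_le_mul_right _ (by omega)

lemma my_not_summable {s : ℝ} (hs : 1 / 4 ≤ s) :
    ¬ Summable (fun m : ℕ => ((m : ℝ) + 1) * (catalan m : ℝ) * s ^ m) := by
  intro hsum
  have hlb : ∀ m : ℕ, (1 : ℝ) / (2 * (m : ℝ) + 2) ≤ ((m : ℝ) + 1) * (catalan m : ℝ) * s ^ m := by
    intro m
    have hcb : ((m : ℝ) + 1) * (catalan m : ℝ) = (Nat.centralBinom m : ℝ) := by
      have := succ_mul_catalan_eq_centralBinom m
      exact_mod_cast congrArg (fun k : ℕ => (k : ℝ)) this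
    have h4 : (4 : ℝ) ^ m ≤ (2 * (m : ℝ) + 2) * (Nat.centralBinom m : ℝ) := by
      exact_mod_cast my_cb_lb m
    have hspow : ((1 : ℝ) / 4) ^ m ≤ s ^ m := pow_le_pow_left₀ (by norm_num) hs m
    have hcbpos : (0 : ℝ) < (Nat.centralBinom m : ℝ) := by
      exact_mod_cast Nat.centralBinom_pos m
    have hm2 : (0 : ℝ) < 2 * (m : ℝ) + 2 := by positivity
    rw [hcb]
    have h4pos : (0 : ℝ) < (4 : ℝ) ^ m := by positivity
    calc (1 : ℝ) / (2 * (m : ℝ) + 2)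
        = (4 : ℝ) ^ m / ((2 * (m : ℝ) + 2) * 4 ^ m) := by
          rw [div_eq_div_iff (ne_of_gt hm2) (by positivity)]; ring
    _ ≤ ((2 * (m : ℝ) + 2) * (Nat.centralBinom m : ℝ)) / ((2 * (m : ℝ) + 2) * 4 ^ m) := by
          gcongr
    _ = (Nat.centralBinom m : ℝ) * (1 / 4) ^ m := by
          rw [mul_div_mul_left _ _ (ne_of_gt hm2), one_div, inv_pow, div_eq_mul_inv]
    _ ≤ (Nat.centralBinom m : ℝ) * s ^ m := by
          exact mul_le_mul_of_nonneg_left hspow (le_of_lt hcbpos)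
  have hsmall : Summable (fun m : ℕ => (1 : ℝ) / (2 * (m : ℝ) + 2)) :=
    Summable.of_nonneg_of_le (fun m => by positivity) hlb hsum
  have h2 : Summable (fun m : ℕ => (1 : ℝ) / ((m : ℝ) + 1)) := by
    have := hsmall.mul_left 2
    apply this.congr
    intro m
    field_simp
  have h3 : Summable (fun n : ℕ => (1 : ℝ) / (n : ℝ)) := by
    apply (summable_nat_add_iff 1).1
    apply h2.congr
    intro m
    push_cast
    ring
  exact Real.not_summable_one_div_natCast h3

end MyAux

/-- first part of Lemma 3.2: For the subcritical binary Galton-Watson tree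
with parameters `p_N, β_N` of Proposition 3.1 (leaf-count probabilities
`u_N n = α n (1-p_N)^n p_N^{n-1}`), conditioned on the root not being marked
(probability `1-γ_N`), the probability of exactly one marked leaf is
`P(A_1^N) = (2p_N/(1-γ_N)) (∑_n n u_N(n) β_N (1-β_N)^{n-1}) (∑_n u_N(n) (1-β_N)^n)`,
it equals `γ_N (1-x_N)/(x_N (1-γ_N))`, and `P(A_1^N)/γ_N → 2b_0/λ_0` as `N → ∞`. -/
theorem stmt_9 (b0 d0 γ a : ℝ) (hb : 0 < b0) (hbd : b0 < d0) (hγ : 0 < γ) (ha : 0 < a)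
    (lam0 : ℝ) (hlam0 : lam0 = d0 - b0)
    (α : ℕ → ℝ) (hα0 : α 0 = 0) (hα1 : α 1 = 1)
    (hαrec : ∀ n, 2 ≤ n → α n = ∑ i ∈ Finset.Ico 1 n, α i * α (n - i))
    (γN pN βN xN : ℕ → ℝ) (u : ℕ → ℕ → ℝ) (PA1 : ℕ → ℝ)
    (hγN : ∀ N : ℕ, γN N = γ / (N : ℝ) ^ a)
    (hpN : ∀ N, pN N = (1 - γN N) * b0 / (b0 + d0))
    (hβN : ∀ N, βN N = (b0 + d0) * γN N / (d0 + b0 * γN N))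
    (hxN : ∀ N, xN N = Real.sqrt (1 - 4 * pN N * (1 - pN N) * (1 - βN N)))
    (hu : ∀ N n, u N n = α n * (1 - pN N) ^ n * pN N ^ (n - 1))
    (hPA1 : ∀ N, PA1 N = 2 * pN N / (1 - γN N) *
      (∑' n : ℕ, (n : ℝ) * u N n * βN N * (1 - βN N) ^ (n - 1)) *
      (∑' n : ℕ, u N n * (1 - βN N) ^ n)) :
    (∀ N : ℕ, 1 ≤ N → PA1 N = γN N * (1 - xN N) / (xN N * (1 - γN N))) ∧
    Tendsto (fun N : ℕ => PA1 N / γN N) atTop (𝓝 (2 * b0 / lam0)) := by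
  have hδ : (0:ℝ) < b0 + d0 := by linarith
  have hδne : (b0 + d0) ≠ 0 := ne_of_gt hδ
  have hd0 : (0:ℝ) < d0 := by linarith
  have hα : ∀ m : ℕ, α (m + 1) = (catalan m : ℝ) := my_alpha_eq α hα1 hαrec
  -- the key identity, valid whenever γN N > 0
  have main : ∀ N : ℕ, 0 < γN N →
      PA1 N = γN N * (1 - xN N) / (xN N * (1 - γN N)) := by
    intro N hg
    have hD : (0:ℝ) < d0 + b0 * γN N := by nlinarith
    have hDne : (d0 + b0 * γN N) ≠ 0 := ne_of_gt hD
    have hβp : βN N * (1 - pN N) = γN N := by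
      rw [hβN, hpN]; field_simp; ring
    by_cases hg1 : γN N = 1
    · -- degenerate case γN N = 1 : both sides are 0 (division by zero)
      have h1g : 1 - γN N = 0 := by rw [hg1]; ring
      rw [hPA1, h1g, hg1]
      simp
    · have h1gne : 1 - γN N ≠ 0 := fun h => hg1 (by linarith)
      have hsform : pN N * (1 - pN N) * (1 - βN N)
          = b0 * d0 * (1 - γN N)^2 / (b0 + d0)^2 := by
        rw [hpN, hβN]; field_simp; ring
      set s : ℝ := pN N * (1 - pN N) * (1 - βN N) with hs_eq
      have hs_pos : 0 < s := by
        rw [hsform]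
        have h2 : (0:ℝ) < (1 - γN N)^2 := by positivity
        positivity
      have hs0 : 0 ≤ s := le_of_lt hs_pos
      have h1p : 1 - pN N = (d0 + b0 * γN N) / (b0 + d0) := by
        rw [hpN]; field_simp; ring
      have h1p_ne : 1 - pN N ≠ 0 := by
        rw [h1p]; exact ne_of_gt (div_pos hD hδ)
      have h1β : 1 - βN N = d0 * (1 - γN N) / (d0 + b0 * γN N) := by
        rw [hβN]; field_simp; ring
      have h1β_ne : 1 - βN N ≠ 0 := by
        rw [h1β]; exact div_ne_zero (mul_ne_zero (ne_of_gt hd0) h1gne) hDne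
      have hp_ne : pN N ≠ 0 := by
        rw [hpN]; exact div_ne_zero (mul_ne_zero h1gne (ne_of_gt hb)) hδne
      have hs_ne : s ≠ 0 := ne_of_gt hs_pos
      -- term identities
      have ht10 : (0:ℝ) * u N 0 * βN N * (1 - βN N) ^ (0 - 1) = 0 := by simp
      have ht1s : ∀ m : ℕ, ((m+1 : ℕ):ℝ) * u N (m+1) * βN N * (1 - βN N) ^ ((m+1) - 1)
          = γN N * (((m:ℝ) + 1) * (catalan m : ℝ) * s ^ m) := by
        intro m
        rw [hu, hα m, Nat.add_sub_cancel, ← hβp, hs_eq]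
        rw [mul_pow, mul_pow]
        push_cast
        ring
      have ht20 : u N 0 * (1 - βN N) ^ 0 = 0 := by
        rw [hu, hα0]; simp
      have ht2s : ∀ m : ℕ, u N (m+1) * (1 - βN N) ^ (m+1)
          = (1 - pN N) * (1 - βN N) * ((catalan m : ℝ) * s ^ m) := by
        intro m
        rw [hu, hα m, Nat.add_sub_cancel, hs_eq]
        rw [mul_pow, mul_pow]
        ring
      by_cases hcase : s < 1/4
      · -- convergent case
        have hH := my_summable_H hs0 hcase
        have hF := my_summable_F hs0 hcase
        have hsum1s : Summable (fun m : ℕ =>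
            ((m+1 : ℕ):ℝ) * u N (m+1) * βN N * (1 - βN N) ^ ((m+1) - 1)) := by
          apply (hH.mul_left (γN N)).congr
          intro m
          exact (ht1s m).symm
        have hsum1 : Summable (fun n : ℕ =>
            (n : ℝ) * u N n * βN N * (1 - βN N) ^ (n - 1)) :=
          (summable_nat_add_iff 1).1 hsum1s
        have hsum2s : Summable (fun m : ℕ => u N (m+1) * (1 - βN N) ^ (m+1)) := by
          apply (hF.mul_left ((1 - pN N) * (1 - βN N))).congr
          intro m
          exact (ht2s m).symm
        have hsum2 : Summable (fun n : ℕ => u N n * (1 - βN N) ^ n) :=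
          (summable_nat_add_iff 1).1 hsum2s
        have hT1 : (∑' n : ℕ, (n : ℝ) * u N n * βN N * (1 - βN N) ^ (n - 1))
            = γN N * Hc s := by
          rw [Summable.tsum_eq_zero_add hsum1]
          push_cast
          rw [ht10, zero_add]
          calc (∑' m : ℕ, ((m:ℝ)+1) * u N (m+1) * βN N * (1 - βN N) ^ (m+1-1))
              = ∑' m : ℕ, γN N * (((m:ℝ) + 1) * (catalan m : ℝ) * s ^ m) := by
                apply tsum_congr
                intro m
                have := ht1s m
                push_cast at this
                exact this
          _ = γN N * Hc s := by rw [tsum_mul_left]; simp only [Hc]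
        have hT2 : (∑' n : ℕ, u N n * (1 - βN N) ^ n)
            = (1 - pN N) * (1 - βN N) * Fc s := by
          rw [Summable.tsum_eq_zero_add hsum2, ht20, zero_add]
          calc (∑' m : ℕ, u N (m+1) * (1 - βN N) ^ (m+1))
              = ∑' m : ℕ, (1 - pN N) * (1 - βN N) * ((catalan m : ℝ) * s ^ m) :=
                tsum_congr ht2s
          _ = (1 - pN N) * (1 - βN N) * Fc s := by rw [tsum_mul_left]; simp only [Fc]
        have hx_eq : xN N = Real.sqrt (1 - 4 * s) := by
          rw [hxN]; congr 1; rw [hs_eq]; ring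
        have hxpos : 0 < xN N := by
          rw [hx_eq]; exact Real.sqrt_pos.mpr (by linarith)
        have hHval : Hc s = 1 / xN N := by rw [hx_eq]; exact my_H_val hs0 hcase
        have hFval : 2 * s * Fc s = 1 - xN N := by
          rw [hx_eq]; exact my_F_val hs0 hcase
        have hFc : Fc s = (1 - xN N) / (2 * s) := by
          rw [eq_div_iff (by positivity : (2:ℝ) * s ≠ 0)]
          linear_combination hFval
        have hxne : xN N ≠ 0 := ne_of_gt hxpos
        rw [hPA1 N, hT1, hT2, hHval, hFc, hs_eq]
        field_simp
      · -- divergent case : both sides are 0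
        have hs4 : 1/4 ≤ s := not_lt.1 hcase
        have hxz : xN N = 0 := by
          rw [hxN, Real.sqrt_eq_zero']
          have : pN N * (1 - pN N) * (1 - βN N) = s := hs_eq.symm
          nlinarith [hs4]
        have hns : ¬ Summable (fun n : ℕ =>
            (n : ℝ) * u N n * βN N * (1 - βN N) ^ (n - 1)) := by
          intro hsum
          have h1 := (summable_nat_add_iff 1).2 hsum
          have h2 : Summable (fun m : ℕ =>
              γN N * (((m:ℝ) + 1) * (catalan m : ℝ) * s ^ m)) := by
            apply h1.congr
            intro m
            have := ht1s m
            push_cast at this ⊢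
            exact this
          have h3 : Summable (fun m : ℕ => ((m:ℝ) + 1) * (catalan m : ℝ) * s ^ m) := by
            have h4 := h2.mul_left (γN N)⁻¹
            apply h4.congr
            intro m
            field_simp
          exact my_not_summable hs4 h3
        rw [hPA1 N, tsum_eq_zero_of_not_summable hns, hxz]
        simp
  constructor
  · intro N hN
    apply main
    rw [hγN]
    have hN0 : (0:ℝ) < (N : ℝ) := by exact_mod_cast hN
    exact div_pos hγ (Real.rpow_pos_of_pos hN0 a)
  · -- the limit
    have hγ0 : Tendsto γN atTop (𝓝 0) := by
      have h1 : Tendsto (fun N : ℕ => ((N:ℝ)) ^ a) atTop atTop :=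
        (tendsto_rpow_atTop ha).comp tendsto_natCast_atTop_atTop
      have h2 := h1.inv_tendsto_atTop
      have h3 : Tendsto (fun N : ℕ => γ / ((N:ℝ)) ^ a) atTop (𝓝 0) := by
        simp only [div_eq_mul_inv]
        simpa using h2.const_mul γ
      exact h3.congr (fun N => (hγN N).symm)
    have hplim : Tendsto pN atTop (𝓝 (b0 / (b0 + d0))) := by
      have h1 : Tendsto (fun N => (1 - γN N) * b0 / (b0 + d0)) atTop
          (𝓝 ((1 - 0) * b0 / (b0 + d0))) :=
        ((hγ0.const_sub 1).mul_const b0).div_const (b0 + d0)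
      simp only [sub_zero, one_mul] at h1
      exact h1.congr (fun N => (hpN N).symm)
    have hβlim : Tendsto βN atTop (𝓝 0) := by
      have h1 : Tendsto (fun N => (b0 + d0) * γN N / (d0 + b0 * γN N)) atTop
          (𝓝 ((b0 + d0) * 0 / (d0 + b0 * 0))) := by
        apply Tendsto.div ((hγ0.const_mul (b0 + d0))) ((hγ0.const_mul b0).const_add d0)
        simp; linarith
      simp only [mul_zero, zero_div] at h1
      exact h1.congr (fun N => (hβN N).symm)
    set L : ℝ := (d0 - b0) / (b0 + d0) with hL
    have hLpos : 0 < L := div_pos (by linarith) hδ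
    have hxlim : Tendsto xN atTop (𝓝 L) := by
      have hin : Tendsto (fun N => 1 - 4 * pN N * (1 - pN N) * (1 - βN N)) atTop
          (𝓝 (1 - 4 * (b0/(b0+d0)) * (1 - b0/(b0+d0)) * (1 - 0))) := by
        apply Tendsto.const_sub
        exact (((hplim.const_mul 4).mul (hplim.const_sub 1)).mul (hβlim.const_sub 1))
      have hval : 1 - 4 * (b0/(b0+d0)) * (1 - b0/(b0+d0)) * (1 - 0) = L^2 := by
        rw [hL]; field_simp; ring
      rw [hval] at hin
      have h2 : Tendsto (fun N => Real.sqrt (1 - 4 * pN N * (1 - pN N) * (1 - βN N)))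
          atTop (𝓝 (Real.sqrt (L^2))) :=
        (Real.continuous_sqrt.tendsto _).comp hin
      rw [Real.sqrt_sq (le_of_lt hLpos)] at h2
      exact h2.congr (fun N => (hxN N).symm)
    have hfinal : Tendsto (fun N : ℕ => (1 - xN N) / (xN N * (1 - γN N))) atTop
        (𝓝 ((1 - L) / (L * (1 - 0)))) := by
      apply Tendsto.div (hxlim.const_sub 1) (hxlim.mul (hγ0.const_sub 1))
      simp only [sub_zero, mul_one]
      exact ne_of_gt hLpos
    have hvlim : (1 - L) / (L * (1 - 0)) = 2 * b0 / lam0 := by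
      rw [hlam0, hL]
      rw [sub_zero, mul_one]
      have hdb : d0 - b0 ≠ 0 := by intro h; linarith [h]
      have hdb' : d0 - b0 ≠ 0 := hdb
      field_simp
      ring
    have hev : (fun N : ℕ => (1 - xN N) / (xN N * (1 - γN N)))
        =ᶠ[atTop] (fun N : ℕ => PA1 N / γN N) := by
      filter_upwards [eventually_ge_atTop 1] with N hN
      have hN0 : (0:ℝ) < (N : ℝ) := by exact_mod_cast hN
      have hgpos : 0 < γN N := by
        rw [hγN]
        exact div_pos hγ (Real.rpow_pos_of_pos hN0 a)
      rw [main N hgpos, mul_div_assoc, mul_div_cancel_left₀ _ (ne_of_gt hgpos)]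
    have hfin2 := Tendsto.congr' hev hfinal
    rwa [hvlim] at hfin2
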